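/- arXiv:1910.04620 — 4 statements merged into one kernel-verified Lean document; each statement's English description precedes it below -/
import Mathlib

section
/- Let V be a finite-dimensional real vector space and A : V → V a linear automorphism all of whose (complex) eigenvalues have modulus different from one. Then there is an A-invariant direct sum decomposition V = E⁻ ⊕ E⁺ and a positive integer p₀ such that for all p ≥ p₀, ‖Aᵖ v‖ ≤ (1/2)‖v‖ for all v ∈ E⁻, and ‖Aᵖ v‖ ≥ 2‖v‖ for all v ∈ E⁺. -/
/-!
Factor the characteristic polynomial `χ` of `A` over `ℝ` as `f * g`, where every complex root of
`f` lies inside the unit circle and every complex root of `g` outside it; this is possible because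
the complex roots of an irreducible real polynomial are complex conjugates of each other, hence
share their modulus. As `f` and `g` are coprime and `f g` kills `A` (Cayley–Hamilton),
`E⁻ = ker f(A)` and `E⁺ = ker g(A)` are complementary and `A`-invariant. The complexified
restriction of `A` to `E⁻`, and that of `A⁻¹` to `E⁺`, have spectral radius `< 1`, so by Gelfand's
formula their powers tend to zero in operator norm.
-/

open Filter Topology Polynomial
open scoped ENNReal

theorem spectrum.tendsto_pow_nhds_zero_of_spectralRadius_lt_one {A : Type*} [NormedRing A]
    [NormedAlgebra ℂ A] [CompleteSpace A] {a : A} (ha : spectralRadius ℂ a < 1) :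
    Tendsto (a ^ ·) atTop (𝓝 0) := by
  obtain ⟨c, hac, hc1⟩ := ENNReal.lt_iff_exists_nnreal_btwn.1 ha
  have hroot := (pow_nnnorm_pow_one_div_tendsto_nhds_spectralRadius a).eventually_lt_const hac
  rw [tendsto_zero_iff_norm_tendsto_zero]
  refine squeeze_zero' (.of_forall fun _ ↦ norm_nonneg _) ?_
    (tendsto_pow_atTop_nhds_zero_of_lt_one c.2 (by exact_mod_cast hc1))
  filter_upwards [hroot, eventually_ne_atTop 0] with n hn hn0
  have : (‖a ^ n‖₊ : ℝ≥0∞) < c ^ n := by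
    simpa [one_div, ENNReal.rpow_inv_natCast_pow hn0] using (ENNReal.pow_lt_pow_left_iff hn0).2 hn
  exact_mod_cast this.le

section

attribute [local instance] Matrix.linftyOpNormedRing Matrix.linftyOpNormedAlgebra

theorem Matrix.tendsto_pow_nhds_zero_of_spectrum {ι : Type*} [Fintype ι] [DecidableEq ι]
    (M : Matrix ι ι ℝ) (hM : ∀ z ∈ spectrum ℂ (M.map (algebraMap ℝ ℂ)), ‖z‖ < 1) :
    Tendsto (M ^ ·) atTop (𝓝 0) := by
  rcases isEmpty_or_nonempty ι with hι | hι
  · exact tendsto_const_nhds.congr fun _ ↦ Subsingleton.elim _ _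
  have hr : spectralRadius ℂ (M.map (algebraMap ℝ ℂ)) < 1 := by
    simpa using spectrum.spectralRadius_lt_of_forall_lt _ (r := 1) fun z hz ↦ by
      exact_mod_cast hM z hz
  have hc := spectrum.tendsto_pow_nhds_zero_of_spectralRadius_lt_one hr
  simp_rw [← Matrix.map_pow] at hc
  refine tendsto_pi_nhds.2 fun i ↦ tendsto_pi_nhds.2 fun j ↦ ?_
  have hentry : Continuous fun N : Matrix ι ι ℂ ↦ (N i j).re :=
    Complex.continuous_re.comp ((continuous_apply j).comp (continuous_apply i))
  simpa [Function.comp_def] using (hentry.tendsto 0).comp hc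

end

theorem Module.End.eventually_norm_pow_apply_le {W : Type*} [NormedAddCommGroup W]
    [NormedSpace ℝ W] [FiniteDimensional ℝ W] (T : Module.End ℝ W)
    (hT : ∀ z : ℂ, Module.End.HasEigenvalue (T.baseChange ℂ) z → ‖z‖ < 1) {ε : ℝ} (hε : 0 < ε) :
    ∀ᶠ p in atTop, ∀ v, ‖(T ^ p) v‖ ≤ ε * ‖v‖ := by
  let b := Module.finBasis ℝ W
  set M := LinearMap.toMatrixAlgEquiv b T
  have hM : ∀ z ∈ spectrum ℂ (M.map (algebraMap ℝ ℂ)), ‖z‖ < 1 := by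
    refine fun z hz ↦ hT z ?_
    rw [Module.End.hasEigenvalue_iff_isRoot_charpoly, LinearMap.charpoly_baseChange,
      ← LinearMap.charpoly_toMatrix T b, ← Matrix.charpoly_map]
    exact Matrix.mem_spectrum_iff_isRoot_charpoly.1 hz
  let Φ : Matrix (Fin (Module.finrank ℝ W)) (Fin (Module.finrank ℝ W)) ℝ →ₗ[ℝ] W →L[ℝ] W :=
    LinearMap.toContinuousLinearMap.toLinearMap ∘ₗ (LinearMap.toMatrixAlgEquiv b).symm.toLinearMap
  have hΦ : Tendsto (fun p ↦ Φ (M ^ p)) atTop (𝓝 0) :=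
    (Φ.continuous_of_finiteDimensional.tendsto' 0 0 (map_zero Φ)).comp
      (M.tendsto_pow_nhds_zero_of_spectrum hM)
  filter_upwards [(tendsto_zero_iff_norm_tendsto_zero.1 hΦ).eventually_le_const hε] with p hp v
  simpa [Φ, M, ← map_pow] using (Φ (M ^ p)).le_of_opNorm_le hp v

theorem Module.End.HasEigenvalue.inv_of_mul_eq_one {K M : Type*} [Field K] [AddCommGroup M]
    [Module K M] {f g : Module.End K M} {μ : K} (hfg : f * g = 1) (h : g.HasEigenvalue μ) :
    f.HasEigenvalue μ⁻¹ := by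
  obtain ⟨x, hx⟩ := h.exists_hasEigenvector
  have hfx : μ • f x = x := by
    rw [← map_smul, ← hx.apply_eq_smul, ← Module.End.mul_apply, hfg, Module.End.one_apply]
  have hμ : μ ≠ 0 := by
    rintro rfl
    exact hx.2 (by simpa using hfx.symm)
  refine Module.End.hasEigenvalue_of_hasEigenvector ⟨Module.End.mem_eigenspace_iff.2 ?_, hx.2⟩
  rw [← hfx, smul_smul, inv_mul_cancel₀ hμ, one_smul, hfx]

theorem Module.End.eventually_norm_le_norm_pow_apply {W : Type*} [NormedAddCommGroup W]
    [NormedSpace ℝ W] [FiniteDimensional ℝ W] (T : Module.End ℝ W) (hinj : Function.Injective T)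
    (hT : ∀ z : ℂ, Module.End.HasEigenvalue (T.baseChange ℂ) z → 1 < ‖z‖) {ε : ℝ} (hε : 0 < ε) :
    ∀ᶠ p in atTop, ∀ v, ‖v‖ ≤ ε * ‖(T ^ p) v‖ := by
  let e := LinearEquiv.ofInjectiveEndo T hinj
  let S : Module.End ℝ W := e.symm
  have hTS : T * S = 1 := LinearMap.ext e.apply_symm_apply
  have hST : S * T = 1 := LinearMap.ext e.symm_apply_apply
  have hS : ∀ z : ℂ, Module.End.HasEigenvalue (S.baseChange ℂ) z → ‖z‖ < 1 := fun z hz ↦ by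
    have := hT _ <| hz.inv_of_mul_eq_one <| by
      rw [← LinearMap.baseChange_mul, hTS, LinearMap.baseChange_one]
    rw [norm_inv, one_lt_inv_iff₀] at this
    exact this.2
  filter_upwards [S.eventually_norm_pow_apply_le hS hε] with p hp v
  simpa [← Module.End.mul_apply, pow_mul_pow_eq_one p hST] using hp ((T ^ p) v)

theorem Module.End.aeval_eq_zero_of_hasEigenvalue_baseChange {K L M : Type*} [Field K] [Field L]
    [Algebra K L] [AddCommGroup M] [Module K M] {S : Module.End K M} {q : K[X]}
    (hq : aeval S q = 0) {z : L} (hz : Module.End.HasEigenvalue (S.baseChange L) z) :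
    aeval z q = 0 := by
  obtain ⟨x, hx⟩ := hz.exists_hasEigenvector
  have hSq : aeval (S.baseChange L) (q.map (algebraMap K L)) = 0 := by
    rw [aeval_map_algebraMap, show S.baseChange L = Module.End.baseChangeHom K L M S from rfl,
      aeval_algHom_apply, hq, map_zero]
  have := Module.End.aeval_apply_of_hasEigenvector (p := q.map (algebraMap K L)) hx
  rw [hSq, LinearMap.zero_apply, eq_comm, smul_eq_zero, eval_map_algebraMap] at this
  exact this.resolve_right hx.2

theorem Module.End.apply_mem_ker_aeval {R M : Type*} [CommRing R] [AddCommGroup M] [Module R M]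
    (T : Module.End R M) (q : R[X]) :
    ∀ x ∈ LinearMap.ker (aeval T q), T x ∈ LinearMap.ker (aeval T q) := by
  intro x hx
  have hcomm : aeval T q * T = T * aeval T q := by
    simpa using ((commute_X q).map (aeval T)).eq.symm
  rw [LinearMap.mem_ker] at hx ⊢
  rw [← Module.End.mul_apply, hcomm, Module.End.mul_apply, hx, map_zero]

theorem Module.End.aeval_restrict_apply {R M : Type*} [CommRing R] [AddCommGroup M] [Module R M]
    (T : Module.End R M) {p : Submodule R M} (h : ∀ x ∈ p, T x ∈ p) (q : R[X]) (x : p) :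
    (aeval (T.restrict h) q x : M) = aeval T q x := by
  induction q using Polynomial.induction_on' with
  | add f g hf hg => simp [hf, hg]
  | monomial n c =>
    rw [aeval_monomial, aeval_monomial, Module.End.mul_apply, Module.End.mul_apply,
      Module.End.pow_restrict]
    simp [Module.algebraMap_end_apply]

theorem Module.End.aeval_restrict_ker_aeval {R M : Type*} [CommRing R] [AddCommGroup M]
    [Module R M] (T : Module.End R M) (q : R[X]) :
    aeval (T.restrict (T.apply_mem_ker_aeval q)) q = 0 :=
  LinearMap.ext fun x ↦ Subtype.ext <| (T.aeval_restrict_apply _ q x).trans x.2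

theorem Submodule.map_equiv_eq_of_mapsTo {K M : Type*} [Field K] [AddCommGroup M] [Module K M]
    [FiniteDimensional K M] (e : M ≃ₗ[K] M) {p : Submodule K M} (h : ∀ x ∈ p, e x ∈ p) :
    p.map (e : M →ₗ[K] M) = p :=
  Submodule.eq_of_le_of_finrank_eq (Submodule.map_le_iff_le_comap.2 h) (e.finrank_map_eq p)

theorem Irreducible.norm_eq_of_aeval_eq_zero {q : ℝ[X]} (hq : Irreducible q) {z w : ℂ}
    (hz : aeval z q = 0) (hw : aeval w q = 0) : ‖z‖ = ‖w‖ := by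
  have : IsAlgClosure ℝ ℂ := ⟨inferInstance, inferInstance⟩
  have hzw : IsConjRoot ℝ z w :=
    (minpoly.eq_of_irreducible hq hz).symm.trans (minpoly.eq_of_irreducible hq hw)
  obtain ⟨σ, rfl⟩ := hzw.exists_algEquiv
  rcases Complex.real_algHom_eq_id_or_conj σ.toAlgHom with h | h
  · rw [show σ w = w from DFunLike.congr_fun h w]
  · rw [show σ w = (starRingEnd ℂ) w from DFunLike.congr_fun h w, Complex.norm_conj]

theorem Polynomial.exists_mul_eq_of_aeval_norm_ne_one (χ : ℝ[X])
    (hχ : ∀ z : ℂ, aeval z χ = 0 → ‖z‖ ≠ 1) :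
    ∃ f g : ℝ[X], f * g = χ ∧ (∀ z : ℂ, aeval z f = 0 → ‖z‖ < 1) ∧
      ∀ z : ℂ, aeval z g = 0 → 1 < ‖z‖ := by
  induction χ using UniqueFactorizationMonoid.induction_on_prime with
  | h₁ => exact (hχ 1 (map_zero _) norm_one).elim
  | h₂ u hu =>
    refine ⟨u, 1, mul_one u, fun z hz ↦ absurd hz (hu.map (aeval z)).ne_zero, fun z hz ↦ ?_⟩
    exact absurd hz (by simp)
  | h₃ a p _ hp ih =>
    obtain ⟨f, g, rfl, hf, hg⟩ := ih fun z hz ↦ hχ z (by simp [hz])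
    by_cases hin : ∀ z : ℂ, aeval z p = 0 → ‖z‖ < 1
    · refine ⟨p * f, g, by ring, fun z hz ↦ ?_, hg⟩
      rw [map_mul, mul_eq_zero] at hz
      exact hz.elim (hin z) (hf z)
    · obtain ⟨w, hw, hw1⟩ : ∃ w : ℂ, aeval w p = 0 ∧ 1 ≤ ‖w‖ := by simpa using hin
      have hw1 : 1 < ‖w‖ := hw1.lt_of_ne (hχ w (by simp [hw])).symm
      refine ⟨f, p * g, by ring, hf, fun z hz ↦ ?_⟩
      rw [map_mul, mul_eq_zero] at hz
      exact hz.elim (fun hz ↦ hp.irreducible.norm_eq_of_aeval_eq_zero hz hw ▸ hw1) (hg z)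

/-- Lemma 2.1: a hyperbolic linear automorphism of a finite-dimensional real normed
space admits an invariant splitting `V = E⁻ ⊕ E⁺` and a power `p₀` such that all
higher powers contract `E⁻` by `1/2` and expand `E⁺` by `2`. -/
theorem stmt0 (V : Type*) [NormedAddCommGroup V] [NormedSpace ℝ V]
    [FiniteDimensional ℝ V] (A : V ≃ₗ[ℝ] V)
    (hyp : ∀ μ : ℂ, Module.End.HasEigenvalue
      ((A : V →ₗ[ℝ] V).baseChange ℂ) μ → ‖μ‖ ≠ 1) :
    ∃ (Em Ep : Submodule ℝ V) (p₀ : ℕ), 0 < p₀ ∧ IsCompl Em Ep ∧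
      Em.map (A : V →ₗ[ℝ] V) = Em ∧ Ep.map (A : V →ₗ[ℝ] V) = Ep ∧
      ∀ p : ℕ, p₀ ≤ p →
        (∀ v ∈ Em, ‖((A : V →ₗ[ℝ] V) ^ p) v‖ ≤ (1/2) * ‖v‖) ∧
        (∀ v ∈ Ep, 2 * ‖v‖ ≤ ‖((A : V →ₗ[ℝ] V) ^ p) v‖) := by
  set T : Module.End ℝ V := (A : V →ₗ[ℝ] V)
  obtain ⟨f, g, hfg, hf, hg⟩ := T.charpoly.exists_mul_eq_of_aeval_norm_ne_one fun z hz ↦ hyp z <| by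
    rwa [Module.End.hasEigenvalue_iff_isRoot_charpoly, LinearMap.charpoly_baseChange, IsRoot,
      eval_map_algebraMap]
  have hcop : IsCoprime f g := (isCoprime_iff_aeval_ne_zero_of_isAlgClosed ℝ ℂ f g).2 fun z ↦
    not_and_or.1 fun h ↦ lt_asymm (hf z h.1) (hg z h.2)
  have hcompl : IsCompl (LinearMap.ker (aeval T f)) (LinearMap.ker (aeval T g)) :=
    ⟨disjoint_ker_aeval_of_isCoprime T hcop, codisjoint_iff.2 <| by
      rw [sup_ker_aeval_eq_ker_aeval_mul_of_coprime T hcop, hfg, LinearMap.aeval_self_charpoly,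
        LinearMap.ker_zero]⟩
  have hroot (q : ℝ[X]) (z : ℂ) (hz : Module.End.HasEigenvalue
      ((T.restrict (T.apply_mem_ker_aeval q)).baseChange ℂ) z) : aeval z q = 0 :=
    Module.End.aeval_eq_zero_of_hasEigenvalue_baseChange (T.aeval_restrict_ker_aeval q) hz
  obtain ⟨pm, hpm⟩ := eventually_atTop.1 <| Module.End.eventually_norm_pow_apply_le _
    (fun z hz ↦ hf z (hroot f z hz)) one_half_pos
  obtain ⟨pp, hpp⟩ := eventually_atTop.1 <| Module.End.eventually_norm_le_norm_pow_apply _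
    (fun x y hxy ↦ Subtype.ext (A.injective (congrArg Subtype.val hxy)))
    (fun z hz ↦ hg z (hroot g z hz)) one_half_pos
  refine ⟨_, _, pm + pp + 1, by omega, hcompl,
    Submodule.map_equiv_eq_of_mapsTo A (T.apply_mem_ker_aeval f),
    Submodule.map_equiv_eq_of_mapsTo A (T.apply_mem_ker_aeval g),
    fun p hp ↦ ⟨fun v hv ↦ ?_, fun v hv ↦ ?_⟩⟩
  · have h := hpm p (by omega) ⟨v, hv⟩
    rw [Module.End.pow_restrict] at h
    exact h
  · have h := hpp p (by omega) ⟨v, hv⟩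
    rw [Module.End.pow_restrict] at h
    change ‖v‖ ≤ 1 / 2 * ‖(T ^ p) v‖ at h
    linarith
end

section
/- Let A be a hyperbolic linear automorphism of ℝ^d with invariant splitting ℝ^d = E⁻ ⊕ E⁺, projections π₊, π₋, and suppose ‖A w‖ ≥ 2‖w‖ for w ∈ E⁺ and ‖A w‖ ≤ (1/2)‖w‖ for w ∈ E⁻. Let η ∈ (0,1/3) and suppose (v_n)_{n≥0} is a sequence in ℝ^d satisfying ‖v_{n+1} − A v_n‖ ≤ η‖v_n‖ for all n, and suppose that the quantity max(‖π₊ v_n‖, ‖π₋ v_n‖) attains a maximum over all n at n = 0, with ‖π₊ v_0‖ ≥ ‖π₋ v_0‖. Then v_0 = 0. -/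
/-!
Put `M = ‖π₊ v₀‖`, so that `‖v₀‖ ≤ 2M`. Expansion on `E⁺` and maximality at `n = 0` give
`2M ≤ ‖π₊ (A v₀)‖ ≤ ‖π₊ v₁‖ + ‖v₁ - A v₀‖ ≤ M + 2ηM`, which forces `M = 0` because `η < 1/2`;
then also `π₋ v₀ = 0`.
-/

section

variable {E : Type*} [SeminormedAddCommGroup E] [Module ℝ E]

theorem two_mul_norm_proj_le_norm_proj_add_norm_sub
    {A π : E →ₗ[ℝ] E} (hcomm : A ∘ₗ π = π ∘ₗ A)
    (hnorm : ∀ v, ‖π v‖ ≤ ‖v‖) (hexp : ∀ v, 2 * ‖π v‖ ≤ ‖A (π v)‖) (x y : E) :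
    2 * ‖π x‖ ≤ ‖π y‖ + ‖y - A x‖ := by
  have hAπ : A (π x) = π y - π (y - A x) := by
    rw [map_sub, sub_sub_cancel]
    exact LinearMap.congr_fun hcomm x
  calc 2 * ‖π x‖ ≤ ‖A (π x)‖ := hexp x
    _ = ‖π y - π (y - A x)‖ := by rw [hAπ]
    _ ≤ ‖π y‖ + ‖π (y - A x)‖ := norm_sub_le _ _
    _ ≤ ‖π y‖ + ‖y - A x‖ := by gcongr; exact hnorm _

end

theorem stmt7_general (d : ℕ)
    (A πp πm : (Fin d → ℝ) →ₗ[ℝ] (Fin d → ℝ))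
    (hsum : ∀ v, πp v + πm v = v)
    (hcommp : A ∘ₗ πp = πp ∘ₗ A)
    (hnormp : ∀ v, ‖πp v‖ ≤ ‖v‖)
    (hexp : ∀ v, 2 * ‖πp v‖ ≤ ‖A (πp v)‖)
    (η : ℝ) (hη : η ∈ Set.Ioo (0 : ℝ) (1/3))
    (v : ℕ → (Fin d → ℝ))
    (hrec : ∀ n, ‖v (n+1) - A (v n)‖ ≤ η * ‖v n‖)
    (hmax : ∀ n, max ‖πp (v n)‖ ‖πm (v n)‖ ≤ max ‖πp (v 0)‖ ‖πm (v 0)‖)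
    (hpm : ‖πm (v 0)‖ ≤ ‖πp (v 0)‖) :
    v 0 = 0 := by
  set M := ‖πp (v 0)‖
  have hv0 : ‖v 0‖ ≤ 2 * M := by
    calc ‖v 0‖ = ‖πp (v 0) + πm (v 0)‖ := by rw [hsum]
      _ ≤ ‖πp (v 0)‖ + ‖πm (v 0)‖ := norm_add_le _ _
      _ ≤ 2 * M := by linarith
  have hv1 : ‖πp (v 1)‖ ≤ M := by
    exact (le_max_left _ _).trans ((hmax 1).trans_eq (max_eq_left hpm))
  have hstep := two_mul_norm_proj_le_norm_proj_add_norm_sub hcommp hnormp hexp (v 0) (v 1)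
  have hM : M = 0 := by
    nlinarith [hη.2, hrec 0, norm_nonneg (v 0), norm_nonneg (πp (v 0))]
  have hπp : πp (v 0) = 0 := norm_eq_zero.mp hM
  have hπm : πm (v 0) = 0 := norm_le_zero_iff.mp (hM ▸ hpm)
  rw [← hsum (v 0), hπp, hπm, add_zero]

/-- The hyperbolic maximum-principle: if a sequence `(vₙ)` satisfies
`‖v_{n+1} − A vₙ‖ ≤ η‖vₙ‖` with `η ∈ (0,1/3)`, where `A` expands the unstable
projection by `2` and contracts the stable projection by `1/2`, and the quantity
`max(‖π₊ vₙ‖, ‖π₋ vₙ‖)` is maximized at `n = 0` with `‖π₊ v₀‖ ≥ ‖π₋ v₀‖`,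
then `v₀ = 0`. -/
theorem stmt7 (d : ℕ) (hd : 0 < d)
    (A πp πm : (Fin d → ℝ) →ₗ[ℝ] (Fin d → ℝ))
    (hsum : ∀ v, πp v + πm v = v)
    (hidemp : πp ∘ₗ πp = πp) (hidemm : πm ∘ₗ πm = πm)
    (hcommp : A ∘ₗ πp = πp ∘ₗ A) (hcommm : A ∘ₗ πm = πm ∘ₗ A)
    (hnormp : ∀ v, ‖πp v‖ ≤ ‖v‖) (hnormm : ∀ v, ‖πm v‖ ≤ ‖v‖)
    (hexp : ∀ v, 2 * ‖πp v‖ ≤ ‖A (πp v)‖)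
    (hcontr : ∀ v, ‖A (πm v)‖ ≤ (1/2) * ‖πm v‖)
    (η : ℝ) (hη : η ∈ Set.Ioo (0 : ℝ) (1/3))
    (v : ℕ → (Fin d → ℝ))
    (hrec : ∀ n, ‖v (n+1) - A (v n)‖ ≤ η * ‖v n‖)
    (hmax : ∀ n, max ‖πp (v n)‖ ‖πm (v n)‖ ≤ max ‖πp (v 0)‖ ‖πm (v 0)‖)
    (hpm : ‖πm (v 0)‖ ≤ ‖πp (v 0)‖) :
    v 0 = 0 :=
  stmt7_general d A πp πm hsum hcommp hnormp hexp η hη v hrec hmax hpm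
end

section
/- Suppose 1 → H → G → ℤ → 1 is a short exact sequence of groups with H finitely generated, inducing ψ ∈ Aut(H) up to inner automorphisms via conjugation by a lift t of a generator of ℤ. If the induced automorphism ψ* of H¹(H,ℝ) has no eigenvalue equal to 1, then H¹(G,ℝ) ≅ ℝ; i.e., every homomorphism G → ℝ is a scalar multiple of the projection G → ℤ. -/
/-- If `1 → H → G → ℤ → 1` with `H` finitely generated and the induced automorphism
`ψ*` of `H¹(H,ℝ)` has no fixed nonzero vector (i.e. `1` is not an eigenvalue),
then every homomorphism `G → ℝ` is a scalar multiple of the projection `G → ℤ`. -/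
theorem stmt9 (G : Type*) [Group G] (q : G →* Multiplicative ℤ)
    (hq : Function.Surjective q) [Group.FG ↥q.ker]
    (t : G) (ht : q t = Multiplicative.ofAdd 1)
    (hinv : ∀ φ : ↥q.ker →* Multiplicative ℝ,
      (∀ (h : G) (hh : h ∈ q.ker),
        φ ⟨t * h * t⁻¹, by
          simp only [MonoidHom.mem_ker, map_mul, map_inv] at hh ⊢
          simp [hh, mul_comm]⟩ = φ ⟨h, hh⟩) → φ = 1) :
    ∀ Φ : G →* Multiplicative ℝ, ∃ c : ℝ,
      ∀ g : G, Multiplicative.toAdd (Φ g)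
        = c * ((Multiplicative.toAdd (q g) : ℤ) : ℝ) := by
  intro Φ
  have hker : ∀ h ∈ q.ker, Φ h = 1 := by
    have := hinv (Φ.comp q.ker.subtype) ?_
    · intro h hh
      have := congrFun (congrArg DFunLike.coe this) ⟨h, hh⟩
      simpa using this
    · intro h hh
      simp only [MonoidHom.comp_apply, Subgroup.coe_subtype, map_mul, map_inv]
      rw [mul_comm, ← mul_assoc]
      simp
  refine ⟨Multiplicative.toAdd (Φ t), fun g => ?_⟩
  set n : ℤ := Multiplicative.toAdd (q g) with hn
  have hmem : g * (t ^ n)⁻¹ ∈ q.ker := by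
    simp only [MonoidHom.mem_ker, map_mul, map_inv, map_zpow, ht]
    simp [← ofAdd_zsmul, hn]
  have h1 : Φ (g * (t ^ n)⁻¹) = 1 := hker _ hmem
  have h2 : Φ g = (Φ t) ^ n := by
    rw [map_mul, map_inv, map_zpow, mul_inv_eq_one] at h1
    exact h1
  rw [h2, toAdd_zpow]
  rw [zsmul_eq_mul]
  ring
end

section
/- Let G = H ⋊_ψ ℤ where H is a finitely generated group and ψ ∈ Aut(H) induces an automorphism ψ* of H¹(H,ℝ) with no eigenvalue of modulus one (and H¹(H,ℝ) ≠ 0). Then every torsion-free nilpotent quotient of G is cyclic (isomorphic to a quotient of ℤ = G/H); in particular, the image of H in any torsion-free nilpotent quotient of G is trivial. -/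
/-!
Let `M = f(H)`, a normal subgroup of the nilpotent group `N`. Modulo `⁅M, N⁆` the image of `H`
is central, so it is abelian and conjugation by the generator of `ℤ`, i.e. `ψ`, acts trivially on
it. A real character of this abelian image therefore pulls back to a `ψ`-invariant character of
`H`, i.e. an eigenvector of `ψ*` with eigenvalue `1`, which hyperbolicity forbids; as `ℝ` is an
injective `ℤ`-module, an abelian group without real characters is torsion. So `M` is torsion
modulo `⁅M, N⁆`, and this propagates down the series `M ≥ ⁅M, N⁆ ≥ ⁅⁅M, N⁆, N⁆ ≥ ⋯`, which reaches
`1` because `N` is nilpotent. Hence `M` is torsion, so trivial, and `N` is a quotient of `ℤ`.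
-/

open Subgroup
open scoped commutatorElement

theorem CommGroup.isOfFinOrder_of_forall_real_char_eq_one {P : Type*} [CommGroup P]
    (hchar : ∀ χ : P →* Multiplicative ℝ, χ = 1) (p : P) : IsOfFinOrder p := by
  by_contra hp
  have hinj : Function.Injective (zmultiplesHom (Additive P) (Additive.ofMul p)) :=
    fun _ _ h => injective_zpow_iff_not_isOfFinOrder.mpr hp h
  obtain ⟨χ, hχ⟩ := (Module.Baer.of_divisible ℝ).extension_property_addMonoidHom _ hinj
    (Int.castAddHom ℝ)
  have hχp : χ (Additive.ofMul p) = 1 := by simpa using DFunLike.congr_fun hχ 1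
  have hχp' : χ (Additive.ofMul p) = 0 :=
    congrArg Multiplicative.toAdd (DFunLike.congr_fun (hchar χ.toMultiplicativeRight) p)
  exact one_ne_zero (hχp.symm.trans hχp')

theorem isOfFinOrder_apply_of_forall_invariant_real_char_eq_one {H Q : Type*} [Group H]
    [Group Q] {ψ : H → H} (hψ : ∀ φ : H →* Multiplicative ℝ, (∀ h, φ (ψ h) = φ h) → φ = 1)
    (θ : H →* Q) (hcomm : ∀ a b, Commute (θ a) (θ b)) (hθ : ∀ h, θ (ψ h) = θ h) (h : H) :
    IsOfFinOrder (θ h) := by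
  let _ : CommGroup θ.range :=
    { θ.range.toGroup with
      mul_comm := by
        rintro ⟨_, a, rfl⟩ ⟨_, b, rfl⟩
        exact Subtype.ext (hcomm a b) }
  have hchar (χ : θ.range →* Multiplicative ℝ) : χ = 1 := by
    refine (MonoidHom.cancel_right θ.rangeRestrict_surjective).mp (hψ _ fun h => ?_)
    simp only [MonoidHom.comp_apply]
    congr 1
    exact Subtype.ext (hθ h)
  exact θ.range.subtype.isOfFinOrder
    (CommGroup.isOfFinOrder_of_forall_real_char_eq_one hchar (θ.rangeRestrict h))

section CommutatorSeries

variable {G : Type*} [Group G]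

def Subgroup.IsTorsionMod (A B : Subgroup G) : Prop :=
  ∀ x ∈ A, ∃ n : ℕ, 0 < n ∧ x ^ n ∈ B

theorem commutatorElement_pow_left_of_commute {a b : G} (h : Commute a ⁅a, b⁆) (n : ℕ) :
    ⁅a ^ n, b⁆ = ⁅a, b⁆ ^ n := by
  induction n with
  | zero => simp
  | succ n ih =>
    have hsucc : ⁅a ^ (n + 1), b⁆ = a * ⁅a ^ n, b⁆ * a⁻¹ * ⁅a, b⁆ := by
      simp only [commutatorElement_def, pow_succ']
      group
    rw [hsucc, ih, pow_succ, (h.pow_right n).eq]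
    group

theorem QuotientGroup.commute_mk'_of_mem {M C : Subgroup G} [C.Normal] (hMC : ⁅M, ⊤⁆ ≤ C)
    {x : G} (hx : x ∈ M) (g : G) : Commute (mk' C x) (mk' C g) := by
  rw [← commutatorElement_eq_one_iff_commute, ← map_commutatorElement, ← MonoidHom.mem_ker,
    ker_mk']
  exact hMC (commutator_mem_commutator hx (mem_top g))

theorem Subgroup.mul_pow_mem_of_commutatorElement_mem {C : Subgroup G} [C.Normal] {x y : G}
    (hxy : ⁅x, y⁆ ∈ C) {n : ℕ} (hx : x ^ n ∈ C) (hy : y ^ n ∈ C) : (x * y) ^ n ∈ C := by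
  rw [← QuotientGroup.ker_mk' C, MonoidHom.mem_ker] at hxy hx hy ⊢
  rw [map_commutatorElement, commutatorElement_eq_one_iff_commute] at hxy
  rw [map_pow, map_mul, hxy.mul_pow, ← map_pow, ← map_pow, hx, hy, one_mul]

theorem Subgroup.IsTorsionMod.commutator_top {A B C : Subgroup G} [C.Normal]
    (hA : A.IsTorsionMod B) (hAB : ⁅A, ⊤⁆ ≤ B) (hBC : ⁅B, ⊤⁆ ≤ C) :
    (⁅A, ⊤⁆ : Subgroup G).IsTorsionMod C := by
  intro y hy
  rw [commutator_def] at hy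
  induction hy using closure_induction with
  | mem y hy =>
    obtain ⟨a, ha, g, -, rfl⟩ := hy
    obtain ⟨n, hn, han⟩ := hA a ha
    refine ⟨n, hn, ?_⟩
    -- modulo `C`, `a` commutes with `⁅a, g⁆`, so `⁅a, g⁆ ^ n ≡ ⁅a ^ n, g⁆ ∈ ⁅B, ⊤⁆`
    set π := QuotientGroup.mk' C
    have hcomm : Commute (π a) ⁅π a, π g⁆ := by
      rw [← map_commutatorElement]
      exact (QuotientGroup.commute_mk'_of_mem hBC
        (hAB (commutator_mem_commutator ha (mem_top g))) a).symm
    rw [← QuotientGroup.ker_mk' C, MonoidHom.mem_ker, map_pow, map_commutatorElement,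
      ← commutatorElement_pow_left_of_commute hcomm, ← map_pow, ← map_commutatorElement,
      ← MonoidHom.mem_ker, QuotientGroup.ker_mk']
    exact hBC (commutator_mem_commutator han (mem_top g))
  | one => exact ⟨1, one_pos, by simp⟩
  | mul x y hx _ hxm hyn =>
    obtain ⟨m, hm, hxm⟩ := hxm
    obtain ⟨n, hn, hyn⟩ := hyn
    rw [← commutator_def] at hx
    refine ⟨m * n, Nat.mul_pos hm hn, mul_pow_mem_of_commutatorElement_mem
      (hBC (commutator_mem_commutator (hAB hx) (mem_top y))) ?_ ?_⟩
    · rw [pow_mul]; exact pow_mem hxm n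
    · rw [mul_comm, pow_mul]; exact pow_mem hyn m
  | inv x _ hxn =>
    obtain ⟨n, hn, hxn⟩ := hxn
    exact ⟨n, hn, by rw [inv_pow]; exact inv_mem hxn⟩

def Subgroup.commutatorTopSeries (M : Subgroup G) : ℕ → Subgroup G
  | 0 => M
  | k + 1 => ⁅M.commutatorTopSeries k, ⊤⁆

instance Subgroup.commutatorTopSeries_normal (M : Subgroup G) [M.Normal] :
    ∀ k, (M.commutatorTopSeries k).Normal
  | 0 => ‹M.Normal›
  | k + 1 =>
    have := M.commutatorTopSeries_normal k
    commutator_normal _ _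

theorem Subgroup.commutatorTopSeries_le_lowerCentralSeries (M : Subgroup G) :
    ∀ k, M.commutatorTopSeries k ≤ (⊤ : Subgroup G).lowerCentralSeries k
  | 0 => le_top
  | k + 1 => commutator_mono (M.commutatorTopSeries_le_lowerCentralSeries k) le_rfl

theorem Subgroup.IsTorsionMod.isOfFinOrder (hG : Group.IsNilpotent G) {A : Subgroup G}
    [A.Normal] (hA : A.IsTorsionMod ⁅A, ⊤⁆) {x : G} (hx : x ∈ A) : IsOfFinOrder x := by
  have hstep (k : ℕ) :
      (A.commutatorTopSeries k).IsTorsionMod (A.commutatorTopSeries (k + 1)) := by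
    induction k with
    | zero => exact hA
    | succ k ih => exact ih.commutator_top le_rfl le_rfl
  have hpow (k : ℕ) : ∃ n : ℕ, 0 < n ∧ x ^ n ∈ A.commutatorTopSeries k := by
    induction k with
    | zero => exact ⟨1, one_pos, by rw [pow_one]; exact hx⟩
    | succ k ih =>
      obtain ⟨n, hn, hxn⟩ := ih
      obtain ⟨m, hm, hxnm⟩ := hstep k _ hxn
      exact ⟨n * m, Nat.mul_pos hn hm, by rwa [pow_mul]⟩
  obtain ⟨c, hc⟩ := nilpotent_iff_lowerCentralSeries.mp hG
  obtain ⟨n, hn, hxn⟩ := hpow c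
  have hxn' := A.commutatorTopSeries_le_lowerCentralSeries c hxn
  rw [hc, mem_bot] at hxn'
  exact isOfFinOrder_iff_pow_eq_one.mpr ⟨n, hn, hxn'⟩

end CommutatorSeries

theorem forall_invariant_real_char_eq_one_of_complex {H : Type*} [Group H] {ψ : H → H}
    (hψ : ∀ φ : H →* Multiplicative ℂ,
      (∀ h, Multiplicative.toAdd (φ (ψ h)) = 1 * Multiplicative.toAdd (φ h)) → φ = 1)
    (φ : H →* Multiplicative ℝ) (hφ : ∀ h, φ (ψ h) = φ h) : φ = 1 := by
  have hφℂ := hψ ((AddMonoidHom.toMultiplicative Complex.ofRealHom.toAddMonoidHom).comp φ)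
    fun h => by simp [hφ h]
  ext h
  exact congrArg Multiplicative.toAdd
    (Complex.ofReal_injective (congrArg Multiplicative.toAdd (DFunLike.congr_fun hφℂ h)))

namespace SemidirectProduct

variable {H N : Type*} [Group H] [Group N]

theorem inl_apply_eq_conj (ψ : MulAut H) (h : H) :
    (inl (ψ h) : H ⋊[zpowersHom (MulAut H) ψ] Multiplicative ℤ) =
      inr (.ofAdd 1) * inl h * (inr (.ofAdd 1))⁻¹ := by
  rw [← map_inv, ← inl_aut]
  simp

theorem normal_map_range_inl {G : Type*} [Group G] {φ : G →* MulAut H} {f : H ⋊[φ] G →* N}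
    (hf : Function.Surjective f) : (inl.range.map f).Normal := by
  refine Normal.map ?_ f hf
  rw [range_inl_eq_ker_rightHom]
  exact MonoidHom.normal_ker _

theorem apply_inl_mem_map_range_inl {G : Type*} [Group G] {φ : G →* MulAut H}
    (f : H ⋊[φ] G →* N) (h : H) : f (inl h) ∈ inl.range.map f :=
  mem_map_of_mem f (MonoidHom.mem_range.mpr ⟨h, rfl⟩)

theorem isCyclic_of_surjective {G : Type*} [Group G] [IsCyclic G] {φ : G →* MulAut H}
    {f : H ⋊[φ] G →* N} (hf : Function.Surjective f) (hinl : ∀ h, f (inl h) = 1) :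
    IsCyclic N := by
  refine _root_.isCyclic_of_surjective (f.comp inr) fun n => ?_
  obtain ⟨g, rfl⟩ := hf n
  refine ⟨g.right, ?_⟩
  conv_rhs => rw [← inl_left_mul_inr_right g]
  rw [map_mul, hinl, one_mul, MonoidHom.comp_apply]

theorem isTorsionMod_map_range_inl (ψ : MulAut H)
    (hψ : ∀ φ : H →* Multiplicative ℝ, (∀ h, φ (ψ h) = φ h) → φ = 1)
    {f : H ⋊[zpowersHom (MulAut H) ψ] Multiplicative ℤ →* N} (hf : Function.Surjective f) :
    (inl.range.map f).IsTorsionMod ⁅inl.range.map f, ⊤⁆ := by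
  set M := inl.range.map f
  have := normal_map_range_inl hf
  set π := QuotientGroup.mk' ⁅M, (⊤ : Subgroup N)⁆
  have hcentral (h : H) (g : N) : Commute (π (f (inl h))) (π g) :=
    QuotientGroup.commute_mk'_of_mem le_rfl (apply_inl_mem_map_range_inl f h) g
  have hinv (h : H) : π (f (inl (ψ h))) = π (f (inl h)) := by
    simp only [inl_apply_eq_conj, map_mul, map_inv]
    rw [(hcentral h _).symm.eq, mul_inv_cancel_right]
  rintro _ ⟨_, ⟨h, rfl⟩, rfl⟩
  obtain ⟨n, hn, hn1⟩ := isOfFinOrder_iff_pow_eq_one.mp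
    (isOfFinOrder_apply_of_forall_invariant_real_char_eq_one hψ (π.comp (f.comp inl))
      (fun a b => hcentral a _) hinv h)
  refine ⟨n, hn, ?_⟩
  rw [← QuotientGroup.ker_mk' ⁅M, (⊤ : Subgroup N)⁆, MonoidHom.mem_ker, map_pow]
  exact hn1

end SemidirectProduct

theorem stmt10_general (H : Type*) [Group H] (ψ : MulAut H)
    (hhyp : ∀ μ : ℂ, ‖μ‖ = 1 →
      ∀ φ : H →* Multiplicative ℂ,
        (∀ h : H, Multiplicative.toAdd (φ (ψ h)) = μ * Multiplicative.toAdd (φ h)) →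
        φ = 1)
    (N : Type*) [Group N] (hnilp : Group.IsNilpotent N)
    (htf : ∀ n : N, IsOfFinOrder n → n = 1)
    (f : (SemidirectProduct H (Multiplicative ℤ) (zpowersHom (MulAut H) ψ)) →* N)
    (hf : Function.Surjective f) :
    (∀ h : H, f (SemidirectProduct.inl h) = 1) ∧ IsCyclic N := by
  have hreal := forall_invariant_real_char_eq_one_of_complex (hhyp 1 norm_one)
  have := SemidirectProduct.normal_map_range_inl hf
  have hinl (h : H) : f (SemidirectProduct.inl h) = 1 :=
    htf _ ((SemidirectProduct.isTorsionMod_map_range_inl ψ hreal hf).isOfFinOrder hnilp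
      (SemidirectProduct.apply_inl_mem_map_range_inl f h))
  exact ⟨hinl, SemidirectProduct.isCyclic_of_surjective hf hinl⟩

/-- If `ψ*` acting on `H¹(H,ℝ) ≠ 0` is hyperbolic (no complex eigenvalue of
modulus one, stated via `ℂ`-valued eigen-homomorphisms), then every torsion-free
nilpotent quotient of `G = H ⋊_ψ ℤ` is cyclic, and the image of `H` in any such
quotient is trivial. -/
theorem stmt10 (H : Type*) [Group H] [Group.FG H] (ψ : MulAut H)
    (hcoh : ∃ φ : H →* Multiplicative ℝ, φ ≠ 1)
    (hhyp : ∀ μ : ℂ, ‖μ‖ = 1 →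
      ∀ φ : H →* Multiplicative ℂ,
        (∀ h : H, Multiplicative.toAdd (φ (ψ h)) = μ * Multiplicative.toAdd (φ h)) →
        φ = 1)
    (N : Type*) [Group N] (hnilp : Group.IsNilpotent N)
    (htf : ∀ n : N, IsOfFinOrder n → n = 1)
    (f : (SemidirectProduct H (Multiplicative ℤ) (zpowersHom (MulAut H) ψ)) →* N)
    (hf : Function.Surjective f) :
    (∀ h : H, f (SemidirectProduct.inl h) = 1) ∧ IsCyclic N :=
  stmt10_general H ψ hhyp N hnilp htf f hf
end
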